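/- arXiv:1404.6917 — 2 statements merged into one kernel-verified Lean document; each statement's English description precedes it below -/
import Mathlib

section
/- Let f = Σ cₖtᵏ ∈ K[[t]], p̂₀,...,p̂_p pairwise distinct and ẑ₀,...,ẑ_q pairwise distinct scalars. If âᵢ, b̂ᵢ satisfy Σᵢ b̂ᵢ = 1 and Σᵢ âᵢ p̂ᵢᵏ − Σᵢ b̂ᵢ Σ_{j=0}^{k−1} c_j ẑᵢ^{k−j} = c_k for k = 0,...,p+q, then the power series expansion of R̂(t) = (Σᵢ âᵢ/(1 − p̂ᵢt))/(Σᵢ b̂ᵢ/(1 − ẑᵢt)) agrees with f through order p+q. -/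
/-!
Write `A = ∑ âᵢ/(1 - p̂ᵢt)` and `N = ∑ b̂ᵢ/(1 - ẑᵢt)`. Expanding the geometric series, the
`k`-th coefficient of `A` is `∑ âᵢ p̂ᵢᵏ` and, because `∑ b̂ᵢ = 1`, the `k`-th coefficient of
`N f` is `∑ b̂ᵢ ∑_{j<k} c_j ẑᵢ^{k-j} + c_k`. So the linear system says exactly that `A - N f`
is divisible by `t^{p+q+1}`; as `N` is a unit, so is
`A/N - f = (A - N f)/N`.
-/

open Finset PowerSeries

namespace PowerSeries

variable {K : Type*} [Field K]

theorem inv_one_sub_C_mul_X (a : K) : (1 - C a * X)⁻¹ = mk fun n => a ^ n := by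
  rw [PowerSeries.inv_eq_iff_mul_eq_one (by simp), mul_sub, mul_one, ← mul_assoc]
  ext (_ | n)
  · simp
  · simp [coeff_succ_mul_X, coeff_mul_C, pow_succ]

theorem coeff_mk_pow_mul_mk (z : K) (c : ℕ → K) (k : ℕ) :
    coeff k ((mk fun n => z ^ n) * mk c) = ∑ j ∈ range k, c j * z ^ (k - j) + c k := by
  rw [mul_comm, coeff_mul, Nat.sum_antidiagonal_eq_sum_range_succ_mk, sum_range_succ]
  simp

theorem coeff_mul_inv_eq_of_coeff_mul_eq {A N f : K⟦X⟧} (hN : constantCoeff N ≠ 0) {n : ℕ}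
    (h : ∀ k ≤ n, coeff k (N * f) = coeff k A) : ∀ k ≤ n, coeff k (A * N⁻¹) = coeff k f := by
  have hdvd : X ^ (n + 1) ∣ A - N * f :=
    X_pow_dvd_iff.2 fun k hk => by rw [map_sub, h k (Nat.lt_succ_iff.1 hk), sub_self]
  have hquot : A * N⁻¹ - f = (A - N * f) * N⁻¹ := by
    rw [sub_mul, mul_comm N f, mul_assoc, PowerSeries.mul_inv_cancel _ hN, mul_one]
  intro k hk
  rw [← sub_eq_zero, ← map_sub, hquot]
  exact X_pow_dvd_iff.1 (dvd_mul_of_dvd_left hdvd _) k (Nat.lt_succ_of_le hk)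

variable (n : ℕ) (a z : ℕ → K)

theorem coeff_sum_C_mul_inv_one_sub_C_mul_X (k : ℕ) :
    coeff k (∑ i ∈ range n, C (a i) * (1 - C (z i) * X)⁻¹) = ∑ i ∈ range n, a i * z i ^ k := by
  simp [inv_one_sub_C_mul_X, coeff_C_mul]

theorem constantCoeff_sum_C_mul_inv_one_sub_C_mul_X :
    constantCoeff (∑ i ∈ range n, C (a i) * (1 - C (z i) * X)⁻¹) = ∑ i ∈ range n, a i := by
  rw [← coeff_zero_eq_constantCoeff_apply, coeff_sum_C_mul_inv_one_sub_C_mul_X]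
  simp

theorem coeff_sum_C_mul_inv_one_sub_C_mul_X_mul_mk (c : ℕ → K) (k : ℕ) :
    coeff k ((∑ i ∈ range n, C (a i) * (1 - C (z i) * X)⁻¹) * mk c) =
      ∑ i ∈ range n, a i * ∑ j ∈ range k, c j * z i ^ (k - j) + (∑ i ∈ range n, a i) * c k := by
  simp only [sum_mul, map_sum, mul_assoc, coeff_C_mul, inv_one_sub_C_mul_X,
    coeff_mk_pow_mul_mk, mul_add, sum_add_distrib]

end PowerSeries

theorem barycentric_form2_accuracy_general
    (K : Type*) [Field K] (p q : ℕ) (c ah bh ph zh : ℕ → K)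
    (hnorm : ∑ i ∈ Finset.range (q + 1), bh i = 1)
    (hsys : ∀ k ≤ p + q,
      ∑ i ∈ Finset.range (p + 1), ah i * ph i ^ k -
        ∑ i ∈ Finset.range (q + 1),
          bh i * ∑ j ∈ Finset.range k, c j * zh i ^ (k - j) = c k) :
    ∀ k ≤ p + q,
      PowerSeries.coeff (R := K) k
        ((∑ i ∈ Finset.range (p + 1),
            PowerSeries.C (R := K) (ah i) * (1 - PowerSeries.C (R := K) (ph i) * PowerSeries.X)⁻¹) *
          (∑ i ∈ Finset.range (q + 1),
            PowerSeries.C (R := K) (bh i) * (1 - PowerSeries.C (R := K) (zh i) * PowerSeries.X)⁻¹)⁻¹) = c k := by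
  intro k hk
  have hunit : constantCoeff (∑ i ∈ range (q + 1), C (bh i) * (1 - C (zh i) * X)⁻¹) ≠ 0 := by
    rw [constantCoeff_sum_C_mul_inv_one_sub_C_mul_X, hnorm]
    exact one_ne_zero
  have hmatch : ∀ m ≤ p + q,
      coeff m ((∑ i ∈ range (q + 1), C (bh i) * (1 - C (zh i) * X)⁻¹) * mk c) =
        coeff m (∑ i ∈ range (p + 1), C (ah i) * (1 - C (ph i) * X)⁻¹) := by
    intro m hm
    rw [coeff_sum_C_mul_inv_one_sub_C_mul_X_mul_mk, coeff_sum_C_mul_inv_one_sub_C_mul_X, hnorm,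
      one_mul, ← hsys m hm]
    ring
  rw [coeff_mul_inv_eq_of_coeff_mul_eq hunit hmatch k hk, coeff_mk]

/-- Form 2 accuracy: if `∑ b̂ᵢ = 1` and
`∑ᵢ âᵢ p̂ᵢᵏ − ∑ᵢ b̂ᵢ ∑_{j<k} c_j ẑᵢ^{k−j} = c_k` for `k = 0,…,p+q`, then the expansion of
`R̂ = (∑ âᵢ/(1 − p̂ᵢ t))/(∑ b̂ᵢ/(1 − ẑᵢ t))` agrees with `f = ∑ c_k t^k` through order
`p + q`. -/
theorem barycentric_form2_accuracy
    (K : Type*) [Field K] (p q : ℕ) (c ah bh ph zh : ℕ → K)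
    (hphd : ∀ i ≤ p, ∀ j ≤ p, i ≠ j → ph i ≠ ph j)
    (hzhd : ∀ i ≤ q, ∀ j ≤ q, i ≠ j → zh i ≠ zh j)
    (hnorm : ∑ i ∈ Finset.range (q + 1), bh i = 1)
    (hsys : ∀ k ≤ p + q,
      ∑ i ∈ Finset.range (p + 1), ah i * ph i ^ k -
        ∑ i ∈ Finset.range (q + 1),
          bh i * ∑ j ∈ Finset.range k, c j * zh i ^ (k - j) = c k) :
    ∀ k ≤ p + q,
      PowerSeries.coeff (R := K) k
        ((∑ i ∈ Finset.range (p + 1),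
            PowerSeries.C (R := K) (ah i) * (1 - PowerSeries.C (R := K) (ph i) * PowerSeries.X)⁻¹) *
          (∑ i ∈ Finset.range (q + 1),
            PowerSeries.C (R := K) (bh i) * (1 - PowerSeries.C (R := K) (zh i) * PowerSeries.X)⁻¹)⁻¹) = c k :=
  barycentric_form2_accuracy_general K p q c ah bh ph zh hnorm hsys
end

section
/- Let âᵢ ∈ K and b̂ᵢ ∈ K be arbitrary with Σᵢ b̂ᵢ = 1 (b̂ᵢ chosen freely), and suppose the âᵢ solve the system Σ_{i=0}^p âᵢ p̂ᵢᵏ = c_k + Σ_{i=0}^q b̂ᵢ Σ_{j=0}^{k−1} c_j ẑᵢ^{k−j} for k = 0,...,p. Then the expansion of R(t) = (Σᵢ âᵢ/(1 − p̂ᵢt))/(Σᵢ b̂ᵢ/(1 − ẑᵢt)) agrees with f = Σ cₖtᵏ through order p (barycentric Padé-type approximant). -/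
/-!
Clearing the denominator `D = ∑ b̂ᵢ/(1 − ẑᵢ t)`, the linear system says precisely that the
numerator `N = ∑ âᵢ/(1 − p̂ᵢ t)` and `f·D` have the same coefficients up to `t^p`: the
coefficient of `t^k` in `N` is `∑ âᵢ p̂ᵢᵏ`, and in `f·D` it is
`∑ b̂ᵢ ∑_{j≤k} c_j ẑᵢ^{k−j}`, whose `j = k` terms sum to `c_k` because `∑ b̂ᵢ = 1`. As
`D(0) = ∑ b̂ᵢ = 1 ≠ 0`, `D` is invertible and `N/D − f = (N − f·D)/D` is divisible by `t^{p+1}`.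
-/

open Finset PowerSeries

section CommRing

variable {R : Type*} [CommRing R]

theorem PowerSeries.mk_pow_mul_one_sub_C_mul_X (a : R) :
    mk (a ^ ·) * (1 - C a * X) = 1 := by
  have h := congrArg (rescale a) (mk_one_mul_one_sub_eq_one R)
  simpa only [map_mul, map_sub, map_one, rescale_X, rescale_mk, Pi.one_apply, mul_one] using h

theorem PowerSeries.coeff_mk_mul_mk_pow (c : ℕ → R) (z : R) (k : ℕ) :
    coeff k (mk c * mk (z ^ ·)) = c k + ∑ j ∈ range k, c j * z ^ (k - j) := by
  rw [coeff_mul, Nat.sum_antidiagonal_eq_sum_range_succ_mk, sum_range_succ, add_comm]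
  simp

end CommRing

section Field

variable {K : Type*} [Field K]

theorem PowerSeries.inv_one_sub_C_mul_X_s12 (a : K) : (1 - C a * X)⁻¹ = mk (a ^ ·) :=
  (inv_eq_iff_mul_eq_one (by simp)).2 (mk_pow_mul_one_sub_C_mul_X a)

theorem PowerSeries.coeff_sum_C_mul_inv_one_sub_C_mul_X_s12 {ι : Type*} (s : Finset ι)
    (w x : ι → K) (k : ℕ) :
    coeff k (∑ i ∈ s, C (w i) * (1 - C (x i) * X)⁻¹) = ∑ i ∈ s, w i * x i ^ k := by
  simp [inv_one_sub_C_mul_X_s12, coeff_C_mul]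

theorem PowerSeries.coeff_mul_inv_eq_of_coeff_eq_coeff_mul {N D F : K⟦X⟧} {p : ℕ}
    (hD : constantCoeff D ≠ 0) (h : ∀ k ≤ p, coeff k N = coeff k (F * D)) :
    ∀ k ≤ p, coeff k (N * D⁻¹) = coeff k F := by
  have hdiff : X ^ (p + 1) ∣ N - F * D :=
    X_pow_dvd_iff.2 fun k hk => by rw [map_sub, h k (Nat.le_of_lt_succ hk), sub_self]
  have hquot : N * D⁻¹ - F = (N - F * D) * D⁻¹ := by
    rw [sub_mul, mul_assoc, PowerSeries.mul_inv_cancel D hD, mul_one]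
  intro k hk
  rw [← sub_eq_zero, ← map_sub, hquot]
  exact X_pow_dvd_iff.1 (dvd_mul_of_dvd_left hdiff _) k (Nat.lt_succ_of_le hk)

end Field

theorem barycentric_pade_type_accuracy_general
    (K : Type*) [Field K] (p q : ℕ) (c ah bh ph zh : ℕ → K)
    (hnorm : ∑ i ∈ Finset.range (q + 1), bh i = 1)
    (hsys : ∀ k ≤ p,
      ∑ i ∈ Finset.range (p + 1), ah i * ph i ^ k =
        c k + ∑ i ∈ Finset.range (q + 1),
          bh i * ∑ j ∈ Finset.range k, c j * zh i ^ (k - j)) :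
    ∀ k ≤ p,
      PowerSeries.coeff (R := K) k
        ((∑ i ∈ Finset.range (p + 1),
            PowerSeries.C (R := K) (ah i) * (1 - PowerSeries.C (R := K) (ph i) * PowerSeries.X)⁻¹) *
          (∑ i ∈ Finset.range (q + 1),
            PowerSeries.C (R := K) (bh i) * (1 - PowerSeries.C (R := K) (zh i) * PowerSeries.X)⁻¹)⁻¹) = c k := by
  have hD : constantCoeff (∑ i ∈ range (q + 1), C (bh i) * (1 - C (zh i) * X)⁻¹) ≠ 0 := by
    rw [← coeff_zero_eq_constantCoeff_apply, coeff_sum_C_mul_inv_one_sub_C_mul_X_s12]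
    simp [hnorm]
  have hnum_eq_mul_den : ∀ k ≤ p,
      coeff k (∑ i ∈ range (p + 1), C (ah i) * (1 - C (ph i) * X)⁻¹) =
        coeff k (mk c * ∑ i ∈ range (q + 1), C (bh i) * (1 - C (zh i) * X)⁻¹) := by
    intro k hk
    rw [coeff_sum_C_mul_inv_one_sub_C_mul_X_s12, hsys k hk, mul_sum, map_sum]
    simp only [mul_left_comm (mk c), coeff_C_mul, inv_one_sub_C_mul_X_s12, coeff_mk_mul_mk_pow,
      mul_add, sum_add_distrib, ← sum_mul, hnorm, one_mul]
  simpa using coeff_mul_inv_eq_of_coeff_eq_coeff_mul hD hnum_eq_mul_den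

/-- Barycentric Padé-type approximant: with `b̂ᵢ` arbitrary subject to `∑ b̂ᵢ = 1`, if the
`âᵢ` solve `∑ᵢ âᵢ p̂ᵢᵏ = c_k + ∑ᵢ b̂ᵢ ∑_{j<k} c_j ẑᵢ^{k−j}` for `k = 0,…,p`, then the
expansion of `R = (∑ âᵢ/(1 − p̂ᵢ t))/(∑ b̂ᵢ/(1 − ẑᵢ t))` agrees with `f = ∑ c_k t^k`
through order `p`. -/
theorem barycentric_pade_type_accuracy
    (K : Type*) [Field K] (p q : ℕ) (c ah bh ph zh : ℕ → K)
    (hphd : ∀ i ≤ p, ∀ j ≤ p, i ≠ j → ph i ≠ ph j)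
    (hzhd : ∀ i ≤ q, ∀ j ≤ q, i ≠ j → zh i ≠ zh j)
    (hnorm : ∑ i ∈ Finset.range (q + 1), bh i = 1)
    (hsys : ∀ k ≤ p,
      ∑ i ∈ Finset.range (p + 1), ah i * ph i ^ k =
        c k + ∑ i ∈ Finset.range (q + 1),
          bh i * ∑ j ∈ Finset.range k, c j * zh i ^ (k - j)) :
    ∀ k ≤ p,
      PowerSeries.coeff (R := K) k
        ((∑ i ∈ Finset.range (p + 1),
            PowerSeries.C (R := K) (ah i) * (1 - PowerSeries.C (R := K) (ph i) * PowerSeries.X)⁻¹) *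
          (∑ i ∈ Finset.range (q + 1),
            PowerSeries.C (R := K) (bh i) * (1 - PowerSeries.C (R := K) (zh i) * PowerSeries.X)⁻¹)⁻¹) = c k :=
  barycentric_pade_type_accuracy_general K p q c ah bh ph zh hnorm hsys
end
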